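/- For every f₁ ∈ C[0,α₀] and f₂ ∈ M, the quantity Φ := D*·E₁(α₀,f₁) − 1/F₂(∞,f₂) satisfies Φ₁(α₀) ≤ Φ ≤ Φ₂(α₀), where Φ₁(α₀) := D*·exp(−a·N₁ᴹ·α₀^{μ−ν+2}/(L₁ₘ·(μ−ν+1))) − L₂ᴹ·β·α₀^β·exp(a·N₂ᴹ/((β−σ−1)·L₂ₘ·α₀^{β−σ−2})) and Φ₂(α₀) := D*·exp(−a·N₁ₘ·α₀^{μ−ν+2}/(L₁ᴹ·(μ−ν+1))). -/

import Mathlib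

/-!
On `(0, α₀]` the ratio `N₁*/L₁*` lies between `(N₁ₘ/L₁ᴹ) η^(μ-ν)` and `(N₁ᴹ/L₁ₘ) η^(μ-ν)`, which
are integrable at `0` because `μ > ν`; integrating bounds `E₁(α₀)` on both sides. On `[α₀, ∞)` the
ratio `N₂*/L₂*` is at most `(N₂ᴹ/L₂ₘ) ξ^(σ-β)`, integrable at `∞` because `β > σ + 1`, so `E₂` stays
above the constant `exp (-K)`, `K` being the exponent appearing in `Φ₁`. Hence the integrand of `F₂`
is at least `exp (-K) ξ^(-β-1) / L₂ᴹ` and `F₂(∞) ≥ exp (-K) α₀^(-β) / (β L₂ᴹ) > 0`; inverting gives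
`0 < 1/F₂(∞) ≤ L₂ᴹ β α₀^β exp K`, which combines with the bounds on `E₁(α₀)`.
-/

open Real Set Filter MeasureTheory Topology

noncomputable section

/-- Membership in the space `M`: bounded continuous on `[α₀,∞)`, `f(α₀)=0`, `f(∞)=−1`. -/
def MemM (α₀ : ℝ) (f : ℝ → ℝ) : Prop :=
  ContinuousOn f (Ici α₀) ∧ (∃ C : ℝ, ∀ ξ ∈ Ici α₀, |f ξ| ≤ C) ∧
    f α₀ = 0 ∧ Tendsto f atTop (nhds (-1))

/-- `E₁(η,f) = exp(−α₀·a·∫₀^η N₁*(f)(s)/L₁*(f)(s) ds)`. -/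
def E1 (α₀ a : ℝ) (Lstar Nstar : (ℝ → ℝ) → ℝ → ℝ) (f : ℝ → ℝ) (η : ℝ) : ℝ :=
  Real.exp (-(α₀ * a * ∫ s in (0:ℝ)..η, Nstar f s / Lstar f s))

/-- `E₂(ξ,f) = exp(−α₀·a·∫_{α₀}^{ξ} N₂*(f)(s)/L₂*(f)(s) ds)`. -/
def E2 (α₀ a : ℝ) (Lstar Nstar : (ℝ → ℝ) → ℝ → ℝ) (f : ℝ → ℝ) (ξ : ℝ) : ℝ :=
  Real.exp (-(α₀ * a * ∫ s in α₀..ξ, Nstar f s / Lstar f s))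

/-- `F₂(ξ,f) = ∫_{α₀}^{ξ} E₂(s,f)/(s·L₂*(f)(s)) ds`. -/
def F2 (α₀ a : ℝ) (Lstar Nstar : (ℝ → ℝ) → ℝ → ℝ) (f : ℝ → ℝ) (ξ : ℝ) : ℝ :=
  ∫ s in α₀..ξ, E2 α₀ a Lstar Nstar f s / (s * Lstar f s)

theorem div_le_mul_rpow_of_le_of_le {n l N L p q s : ℝ} (hs : 0 < s) (hN : 0 ≤ N) (hL : 0 < L)
    (hn : n ≤ N * s ^ p) (hl : L * s ^ q ≤ l) : n / l ≤ N / L * s ^ (p - q) := by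
  rw [rpow_sub hs, ← mul_div_mul_comm]
  exact div_le_div₀ (by positivity) hn (by positivity) hl

theorem mul_rpow_le_div_of_le_of_le {n l N L p q s : ℝ} (hs : 0 < s) (hN : 0 ≤ N) (hl : 0 < l)
    (hn : N * s ^ p ≤ n) (hl' : l ≤ L * s ^ q) : N / L * s ^ (p - q) ≤ n / l := by
  rw [rpow_sub hs, ← mul_div_mul_comm]
  exact div_le_div₀ ((by positivity : 0 ≤ N * s ^ p).trans hn) hn hl hl'

theorem integral_zero_rpow {r x : ℝ} (hr : -1 < r) :
    ∫ s in (0 : ℝ)..x, s ^ r = x ^ (r + 1) / (r + 1) := by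
  rw [integral_rpow (Or.inl hr), zero_rpow (by linarith), sub_zero]

theorem mul_le_integral_of_mul_rpow_le {f : ℝ → ℝ} {A r x : ℝ} (hx : 0 ≤ x) (hr : -1 < r)
    (hf : IntervalIntegrable f volume 0 x) (h : ∀ s ∈ Ioo 0 x, A * s ^ r ≤ f s) :
    A * (x ^ (r + 1) / (r + 1)) ≤ ∫ s in (0 : ℝ)..x, f s := by
  rw [← integral_zero_rpow hr, ← intervalIntegral.integral_const_mul]
  exact intervalIntegral.integral_mono_on_of_le_Ioo hx
    ((intervalIntegral.intervalIntegrable_rpow' hr).const_mul A) hf h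

theorem integral_le_mul_of_le_mul_rpow {f : ℝ → ℝ} {B r x : ℝ} (hx : 0 ≤ x) (hr : -1 < r)
    (hf : IntervalIntegrable f volume 0 x) (h : ∀ s ∈ Ioo 0 x, f s ≤ B * s ^ r) :
    ∫ s in (0 : ℝ)..x, f s ≤ B * (x ^ (r + 1) / (r + 1)) := by
  rw [← integral_zero_rpow hr, ← intervalIntegral.integral_const_mul]
  exact intervalIntegral.integral_mono_on_of_le_Ioo hx hf
    ((intervalIntegral.intervalIntegrable_rpow' hr).const_mul B) h

theorem intervalIntegrable_rpow_of_pos {r x₀ x : ℝ} (hx₀ : 0 < x₀) (hx : x₀ ≤ x) :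
    IntervalIntegrable (fun t => t ^ r) volume x₀ x :=
  intervalIntegral.intervalIntegrable_rpow (Or.inr (notMem_uIcc_of_lt hx₀ (hx₀.trans_le hx)))

theorem integral_rpow_le_of_lt_neg_one {r x₀ x : ℝ} (hx₀ : 0 < x₀) (hx : x₀ ≤ x) (hr : r < -1) :
    ∫ t in x₀..x, t ^ r ≤ -x₀ ^ (r + 1) / (r + 1) := by
  rw [← integral_Ioi_rpow_of_lt hr hx₀, intervalIntegral.integral_of_le hx]
  refine setIntegral_mono_set (integrableOn_Ioi_rpow_of_lt hr hx₀) ?_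
    Ioc_subset_Ioi_self.eventuallyLE
  filter_upwards [ae_restrict_mem measurableSet_Ioi] with t ht
  exact rpow_nonneg (hx₀.trans ht).le r

theorem tendsto_integral_rpow_atTop {r x₀ : ℝ} (hx₀ : 0 < x₀) (hr : r < -1) :
    Tendsto (fun x => ∫ t in x₀..x, t ^ r) atTop (𝓝 (-x₀ ^ (r + 1) / (r + 1))) :=
  integral_Ioi_rpow_of_lt hr hx₀ ▸
    intervalIntegral_tendsto_integral_Ioi x₀ (integrableOn_Ioi_rpow_of_lt hr hx₀) tendsto_id

theorem integral_le_mul_of_le_mul_rpow_of_lt_neg_one {g : ℝ → ℝ} {B r x₀ x : ℝ} (hx₀ : 0 < x₀)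
    (hx : x₀ ≤ x) (hr : r < -1) (hB : 0 ≤ B) (hg : IntervalIntegrable g volume x₀ x)
    (h : ∀ t ∈ Icc x₀ x, g t ≤ B * t ^ r) :
    ∫ t in x₀..x, g t ≤ B * (-x₀ ^ (r + 1) / (r + 1)) := calc
  ∫ t in x₀..x, g t ≤ ∫ t in x₀..x, B * t ^ r :=
    intervalIntegral.integral_mono_on hx hg
      ((intervalIntegrable_rpow_of_pos hx₀ hx).const_mul B) h
  _ ≤ B * (-x₀ ^ (r + 1) / (r + 1)) := by
    rw [intervalIntegral.integral_const_mul]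
    exact mul_le_mul_of_nonneg_left (integral_rpow_le_of_lt_neg_one hx₀ hx hr) hB

theorem mul_le_of_tendsto_integral_of_mul_rpow_le {g : ℝ → ℝ} {B r x₀ F : ℝ} (hx₀ : 0 < x₀)
    (hr : r < -1) (hg : ∀ x ≥ x₀, IntervalIntegrable g volume x₀ x)
    (h : ∀ t ≥ x₀, B * t ^ r ≤ g t)
    (hF : Tendsto (fun x => ∫ t in x₀..x, g t) atTop (𝓝 F)) :
    B * (-x₀ ^ (r + 1) / (r + 1)) ≤ F := by
  refine le_of_tendsto_of_tendsto ((tendsto_integral_rpow_atTop hx₀ hr).const_mul B) hF ?_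
  filter_upwards [eventually_ge_atTop x₀] with x hx
  rw [← intervalIntegral.integral_const_mul]
  exact intervalIntegral.integral_mono_on hx
    ((intervalIntegrable_rpow_of_pos hx₀ hx).const_mul B) (hg x hx)
    fun t ht => h t ht.1

theorem E1_bounds {α₀ a μ ν L1m L1M N1m N1M : ℝ} {L1star N1star : (ℝ → ℝ) → ℝ → ℝ}
    {f : ℝ → ℝ} (hα₀ : 0 < α₀) (ha : 0 ≤ a) (hνμ : ν < μ) (hL1m : 0 < L1m) (hN1m : 0 ≤ N1m)
    (hN1M : 0 ≤ N1M)
    (hL : ∀ η ∈ Ioc 0 α₀, L1m * η ^ (-μ) ≤ L1star f η ∧ L1star f η ≤ L1M * η ^ (-μ))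
    (hN : ∀ η ∈ Ioc 0 α₀, N1m * η ^ (-ν) ≤ N1star f η ∧ N1star f η ≤ N1M * η ^ (-ν))
    (hint : IntervalIntegrable (fun s => N1star f s / L1star f s) volume 0 α₀) :
    exp (-(a * N1M * α₀ ^ (μ - ν + 2) / (L1m * (μ - ν + 1)))) ≤ E1 α₀ a L1star N1star f α₀ ∧
      E1 α₀ a L1star N1star f α₀ ≤ exp (-(a * N1m * α₀ ^ (μ - ν + 2) / (L1M * (μ - ν + 1)))) := by
  have hr : -1 < μ - ν := by linarith
  have hexp : -ν - -μ = μ - ν := by ring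
  have hratio : ∀ s ∈ Ioo 0 α₀, N1m / L1M * s ^ (μ - ν) ≤ N1star f s / L1star f s ∧
      N1star f s / L1star f s ≤ N1M / L1m * s ^ (μ - ν) := by
    intro s hs
    obtain ⟨hLlo, hLhi⟩ := hL s (Ioo_subset_Ioc_self hs)
    obtain ⟨hNlo, hNhi⟩ := hN s (Ioo_subset_Ioc_self hs)
    have hLpos : 0 < L1star f s := (mul_pos hL1m (rpow_pos_of_pos hs.1 _)).trans_le hLlo
    rw [← hexp]
    exact ⟨mul_rpow_le_div_of_le_of_le hs.1 hN1m hLpos hNlo hLhi,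
      div_le_mul_rpow_of_le_of_le hs.1 hN1M hL1m hNhi hLlo⟩
  have hscale : ∀ K L : ℝ, a * K * α₀ ^ (μ - ν + 2) / (L * (μ - ν + 1)) =
      α₀ * a * (K / L * (α₀ ^ (μ - ν + 1) / (μ - ν + 1))) := by
    intro K L
    rw [show μ - ν + 2 = (μ - ν + 1) + 1 by ring, rpow_add hα₀, rpow_one, div_mul_div_comm]
    ring
  unfold E1
  constructor <;> refine exp_le_exp.2 (neg_le_neg ?_) <;> rw [hscale] <;>
    refine mul_le_mul_of_nonneg_left ?_ (by positivity)
  · exact integral_le_mul_of_le_mul_rpow hα₀.le hr hint fun s hs => (hratio s hs).2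
  · exact mul_le_integral_of_mul_rpow_le hα₀.le hr hint fun s hs => (hratio s hs).1

theorem exp_neg_le_E2 {α₀ a β σ L2m N2M ξ : ℝ} {L2star N2star : (ℝ → ℝ) → ℝ → ℝ} {f : ℝ → ℝ}
    (hα₀ : 0 < α₀) (ha : 0 ≤ a) (hβσ : σ + 1 < β) (hL2m : 0 < L2m) (hN2M : 0 ≤ N2M)
    (hL : ∀ ξ ∈ Ici α₀, L2m * ξ ^ β ≤ L2star f ξ) (hN : ∀ ξ ∈ Ici α₀, N2star f ξ ≤ N2M * ξ ^ σ)
    (hξ : α₀ ≤ ξ) (hq : IntervalIntegrable (fun s => N2star f s / L2star f s) volume α₀ ξ) :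
    exp (-(a * N2M / ((β - σ - 1) * L2m * α₀ ^ (β - σ - 2)))) ≤ E2 α₀ a L2star N2star f ξ := by
  have hint := integral_le_mul_of_le_mul_rpow_of_lt_neg_one hα₀ hξ (r := σ - β) (by linarith)
    (div_nonneg hN2M hL2m.le) hq fun t ht =>
      div_le_mul_rpow_of_le_of_le (hα₀.trans_le ht.1) hN2M hL2m (hN t ht.1) (hL t ht.1)
  have hβσ' : β - σ - 1 ≠ 0 := by linarith
  unfold E2
  refine exp_le_exp.2 (neg_le_neg ?_)
  calc α₀ * a * ∫ s in α₀..ξ, N2star f s / L2star f s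
      ≤ α₀ * a * (N2M / L2m * (-α₀ ^ (σ - β + 1) / (σ - β + 1))) :=
        mul_le_mul_of_nonneg_left hint (by positivity)
    _ = a * N2M / ((β - σ - 1) * L2m * α₀ ^ (β - σ - 2)) := by
        rw [show σ - β + 1 = -(β - σ - 2) - 1 by ring, rpow_sub hα₀, rpow_neg hα₀.le, rpow_one,
          show -(β - σ - 2) - 1 = -(β - σ - 1) by ring]
        field_simp

theorem one_div_le_of_tendsto_F2 {α₀ a β σ L2m L2M N2M F : ℝ}
    {L2star N2star : (ℝ → ℝ) → ℝ → ℝ} {f : ℝ → ℝ}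
    (hα₀ : 0 < α₀) (ha : 0 ≤ a) (hβ : 0 < β) (hβσ : σ + 1 < β) (hL2m : 0 < L2m)
    (hL2M : 0 < L2M) (hN2M : 0 ≤ N2M)
    (hLcont : ContinuousOn (L2star f) (Ici α₀)) (hNcont : ContinuousOn (N2star f) (Ici α₀))
    (hL : ∀ ξ ∈ Ici α₀, L2m * ξ ^ β ≤ L2star f ξ ∧ L2star f ξ ≤ L2M * ξ ^ β)
    (hN : ∀ ξ ∈ Ici α₀, N2star f ξ ≤ N2M * ξ ^ σ)
    (hF : Tendsto (F2 α₀ a L2star N2star f) atTop (𝓝 F)) :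
    0 < F ∧
      1 / F ≤ L2M * β * α₀ ^ β * exp (a * N2M / ((β - σ - 1) * L2m * α₀ ^ (β - σ - 2))) := by
  set K := a * N2M / ((β - σ - 1) * L2m * α₀ ^ (β - σ - 2))
  have hLpos : ∀ s ∈ Ici α₀, 0 < L2star f s := fun s hs =>
    (mul_pos hL2m (rpow_pos_of_pos (hα₀.trans_le hs) _)).trans_le (hL s hs).1
  have hqint : ∀ x ≥ α₀, IntervalIntegrable (fun s => N2star f s / L2star f s) volume α₀ x :=
    fun x hx => ((hNcont.div hLcont fun s hs => (hLpos s hs).ne').mono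
      Icc_subset_Ici_self).intervalIntegrable_of_Icc hx
  have hE2 : ∀ s ≥ α₀, exp (-K) ≤ E2 α₀ a L2star N2star f s := fun s hs =>
    exp_neg_le_E2 hα₀ ha hβσ hL2m hN2M (fun ξ hξ => (hL ξ hξ).1) hN hs (hqint s hs)
  have hgint : ∀ x ≥ α₀, IntervalIntegrable
      (fun s => E2 α₀ a L2star N2star f s / (s * L2star f s)) volume α₀ x := by
    intro x hx
    have hprim := intervalIntegral.continuousOn_primitive_interval' (hqint x hx) left_mem_uIcc
    rw [uIcc_of_le hx] at hprim
    exact ContinuousOn.intervalIntegrable_of_Icc hx <|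
      (continuous_exp.comp_continuousOn (continuousOn_const.mul hprim).neg).div
        (continuousOn_id.mul (hLcont.mono Icc_subset_Ici_self))
        fun s hs => (mul_pos (hα₀.trans_le hs.1) (hLpos s hs.1)).ne'
  -- `E₂` is only bounded below by a constant, hence the exponent `0` in the numerator.
  have hg : ∀ s ≥ α₀, exp (-K) / L2M * s ^ (0 - (β + 1)) ≤
      E2 α₀ a L2star N2star f s / (s * L2star f s) := by
    intro s hs
    have hs0 := hα₀.trans_le hs
    refine mul_rpow_le_div_of_le_of_le hs0 (exp_pos _).le (mul_pos hs0 (hLpos s hs)) ?_ ?_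
    · rw [rpow_zero, mul_one]
      exact hE2 s hs
    · rw [rpow_add hs0, rpow_one]
      nlinarith [(hL s hs).2]
  have hlow := mul_le_of_tendsto_integral_of_mul_rpow_le hα₀ (by linarith) hgint hg hF
  rw [show 0 - (β + 1) + 1 = -β by ring, rpow_neg hα₀.le, neg_div_neg_eq] at hlow
  have hpos : 0 < exp (-K) / L2M * ((α₀ ^ β)⁻¹ / β) := by positivity
  refine ⟨hpos.trans_le hlow, (one_div_le_one_div_of_le hpos hlow).trans_eq ?_⟩
  rw [exp_neg]
  field_simp

theorem statement14_general
    (α₀ a Dstar μ ν L1m L1M N1m N1M β σ L2m L2M N2m N2M : ℝ)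
    (hα₀ : 0 < α₀) (ha : 0 < a) (hD : 0 < Dstar)
    (hL1m : 0 < L1m)
    (hN1m : 0 < N1m) (hN1M : 0 < N1M)
    (hμ : max 1 ν < μ)
    (hβpos : 0 < β) (hL2m : 0 < L2m) (hL2M : 0 < L2M)
    (hN2M : 0 < N2M)
    (hβ : σ + 2 < β)
    (L1star N1star : (ℝ → ℝ) → ℝ → ℝ)
    (hL1bd : ∀ f : ℝ → ℝ, ContinuousOn f (Icc 0 α₀) → ∀ η ∈ Ioc (0:ℝ) α₀,
      L1m * η ^ (-μ) ≤ L1star f η ∧ L1star f η ≤ L1M * η ^ (-μ))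
    (hN1bd : ∀ f : ℝ → ℝ, ContinuousOn f (Icc 0 α₀) → ∀ η ∈ Ioc (0:ℝ) α₀,
      N1m * η ^ (-ν) ≤ N1star f η ∧ N1star f η ≤ N1M * η ^ (-ν))
    (L2star N2star : (ℝ → ℝ) → ℝ → ℝ)
    (hL2cont : ∀ f : ℝ → ℝ, MemM α₀ f → ContinuousOn (L2star f) (Ici α₀))
    (hN2cont : ∀ f : ℝ → ℝ, MemM α₀ f → ContinuousOn (N2star f) (Ici α₀))
    (hL2bd : ∀ f : ℝ → ℝ, MemM α₀ f → ∀ ξ ∈ Ici α₀,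
      L2m * ξ ^ β ≤ L2star f ξ ∧ L2star f ξ ≤ L2M * ξ ^ β)
    (hN2bd : ∀ f : ℝ → ℝ, MemM α₀ f → ∀ ξ ∈ Ici α₀,
      N2m * ξ ^ σ ≤ N2star f ξ ∧ N2star f ξ ≤ N2M * ξ ^ σ)
    (f1 : ℝ → ℝ) (hf1 : ContinuousOn f1 (Icc 0 α₀))
    (hint1 : ∀ η ∈ Icc (0:ℝ) α₀,
      IntervalIntegrable (fun s => N1star f1 s / L1star f1 s) volume 0 η)
    (f2 : ℝ → ℝ) (hf2 : MemM α₀ f2)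
    (Ff : ℝ) (hFf : Tendsto (F2 α₀ a L2star N2star f2) atTop (nhds Ff)) :
    Dstar * Real.exp (-(a * N1M * α₀ ^ (μ - ν + 2) / (L1m * (μ - ν + 1)))) -
        L2M * β * α₀ ^ β *
          Real.exp (a * N2M / ((β - σ - 1) * L2m * α₀ ^ (β - σ - 2))) ≤
      Dstar * E1 α₀ a L1star N1star f1 α₀ - 1 / Ff ∧
    Dstar * E1 α₀ a L1star N1star f1 α₀ - 1 / Ff ≤
      Dstar * Real.exp (-(a * N1m * α₀ ^ (μ - ν + 2) / (L1M * (μ - ν + 1)))) := by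
  obtain ⟨hE1lo, hE1hi⟩ := E1_bounds hα₀ ha.le ((le_max_right 1 ν).trans_lt hμ) hL1m hN1m.le
    hN1M.le (hL1bd f1 hf1) (hN1bd f1 hf1) (hint1 α₀ ⟨hα₀.le, le_rfl⟩)
  obtain ⟨hFpos, hF⟩ := one_div_le_of_tendsto_F2 hα₀ ha.le hβpos (by linarith) hL2m hL2M hN2M.le
    (hL2cont f2 hf2) (hN2cont f2 hf2) (hL2bd f2 hf2) (fun ξ hξ => (hN2bd f2 hf2 ξ hξ).2) hFf
  have hFinv : 0 < 1 / Ff := one_div_pos.2 hFpos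
  constructor
  · linarith [mul_le_mul_of_nonneg_left hE1lo hD.le]
  · linarith [mul_le_mul_of_nonneg_left hE1hi hD.le]

theorem statement14
    (α₀ a Dstar μ ν L1m L1M N1m N1M β σ L2m L2M N2m N2M : ℝ)
    (hα₀ : 0 < α₀) (ha : 0 < a) (hD : 0 < Dstar)
    (hμpos : 0 < μ) (hνpos : 0 < ν) (hL1m : 0 < L1m) (hL1M : 0 < L1M)
    (hN1m : 0 < N1m) (hN1M : 0 < N1M)
    (hμ : max 1 ν < μ) (hL1mM : L1m ≤ L1M) (hN1mM : N1m ≤ N1M)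
    (hβpos : 0 < β) (hσpos : 0 < σ) (hL2m : 0 < L2m) (hL2M : 0 < L2M)
    (hN2m : 0 < N2m) (hN2M : 0 < N2M)
    (hβ : σ + 2 < β) (hL2mM : L2m ≤ L2M) (hN2mM : N2m ≤ N2M)
    (L1star N1star : (ℝ → ℝ) → ℝ → ℝ)
    (hL1cont : ∀ f : ℝ → ℝ, ContinuousOn f (Icc 0 α₀) → ContinuousOn (L1star f) (Ioc 0 α₀))
    (hN1cont : ∀ f : ℝ → ℝ, ContinuousOn f (Icc 0 α₀) → ContinuousOn (N1star f) (Ioc 0 α₀))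
    (hL1bd : ∀ f : ℝ → ℝ, ContinuousOn f (Icc 0 α₀) → ∀ η ∈ Ioc (0:ℝ) α₀,
      L1m * η ^ (-μ) ≤ L1star f η ∧ L1star f η ≤ L1M * η ^ (-μ))
    (hN1bd : ∀ f : ℝ → ℝ, ContinuousOn f (Icc 0 α₀) → ∀ η ∈ Ioc (0:ℝ) α₀,
      N1m * η ^ (-ν) ≤ N1star f η ∧ N1star f η ≤ N1M * η ^ (-ν))
    (L2star N2star : (ℝ → ℝ) → ℝ → ℝ)
    (hL2cont : ∀ f : ℝ → ℝ, MemM α₀ f → ContinuousOn (L2star f) (Ici α₀))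
    (hN2cont : ∀ f : ℝ → ℝ, MemM α₀ f → ContinuousOn (N2star f) (Ici α₀))
    (hL2bd : ∀ f : ℝ → ℝ, MemM α₀ f → ∀ ξ ∈ Ici α₀,
      L2m * ξ ^ β ≤ L2star f ξ ∧ L2star f ξ ≤ L2M * ξ ^ β)
    (hN2bd : ∀ f : ℝ → ℝ, MemM α₀ f → ∀ ξ ∈ Ici α₀,
      N2m * ξ ^ σ ≤ N2star f ξ ∧ N2star f ξ ≤ N2M * ξ ^ σ)
    (f1 : ℝ → ℝ) (hf1 : ContinuousOn f1 (Icc 0 α₀))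
    (hint1 : ∀ η ∈ Icc (0:ℝ) α₀,
      IntervalIntegrable (fun s => N1star f1 s / L1star f1 s) volume 0 η)
    (f2 : ℝ → ℝ) (hf2 : MemM α₀ f2)
    (Ff : ℝ) (hFf : Tendsto (F2 α₀ a L2star N2star f2) atTop (nhds Ff))
    (hFfpos : 0 < Ff) :
    Dstar * Real.exp (-(a * N1M * α₀ ^ (μ - ν + 2) / (L1m * (μ - ν + 1)))) -
        L2M * β * α₀ ^ β *
          Real.exp (a * N2M / ((β - σ - 1) * L2m * α₀ ^ (β - σ - 2))) ≤
      Dstar * E1 α₀ a L1star N1star f1 α₀ - 1 / Ff ∧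
    Dstar * E1 α₀ a L1star N1star f1 α₀ - 1 / Ff ≤
      Dstar * Real.exp (-(a * N1m * α₀ ^ (μ - ν + 2) / (L1M * (μ - ν + 1)))) :=
  statement14_general α₀ a Dstar μ ν L1m L1M N1m N1M β σ L2m L2M N2m N2M hα₀ ha hD hL1m hN1m hN1M hμ
    hβpos hL2m hL2M hN2M hβ L1star N1star hL1bd hN1bd L2star N2star hL2cont hN2cont hL2bd hN2bd f1
    hf1 hint1 f2 hf2 Ff hFf
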